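/- arXiv:1106.2561 — 3 statements merged into one kernel-verified Lean document; each statement's English description precedes it below -/
import Mathlib

section
/- Let n∈ℕ, s∈(0,1), p∈(0,n/s) and σ > np/(n−ps). Define u on ℝⁿ by u(x) := |x|^{−n/σ} for 0<|x|<1 and u(x) := 1 for |x|≥1. Then for every q∈(0,∞], u belongs to the homogeneous Besov space Ḃ^s_{p,q}(ℝⁿ), but u is not locally σ-integrable: ∫_{B(0,1)} |u(x)|^σ dx = ∞. -/
open MeasureTheory Metric Set ENNReal NNReal

noncomputable section

variable {X : Type*} [MetricSpace X] [MeasurableSpace X] [BorelSpace X]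

/-- The doubling property with constant `C₁` and exponent `n`:
`μ(B(x, L r)) ≤ C₁ L^n μ(B(x, r))` for all `x`, `r > 0`, `L > 1`. -/
def IsDoubling (μ : Measure X) (C₁ n : ℝ) : Prop :=
  ∀ (x : X) (r L : ℝ), 0 < r → 1 < L →
    μ (ball x (L * r)) ≤ ENNReal.ofReal (C₁ * L ^ n) * μ (ball x r)

/-- Every ball has finite positive measure. -/
def BallsPosFinite (μ : Measure X) : Prop :=
  ∀ (x : X) (r : ℝ), 0 < r → 0 < μ (ball x r) ∧ μ (ball x r) < ∞

/-- `u ∈ L^p_loc(X)` for `p ∈ (0,∞]`: `u` is `p`-integrable on every ball. -/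
def MemLocLp (μ : Measure X) (u : X → ℝ) (p : ℝ≥0∞) : Prop :=
  ∀ (x : X) (r : ℝ), 0 < r → MemLp u p (μ.restrict (ball x r))

/-- `u ∈ L^σ_loc(X)` for a real exponent `σ ∈ (0,∞)`. -/
def MemLocLsigma (μ : Measure X) (u : X → ℝ) (σ : ℝ) : Prop :=
  ∀ (x : X) (r : ℝ), 0 < r → ∫⁻ y in ball x r, ENNReal.ofReal |u y| ^ σ ∂μ < ∞

/-- `(∫₀^∞ (F t)^q dt/t)^{1/q}`, with the usual modification when `q = ∞`. -/
def timeNorm (q : ℝ≥0∞) (F : ℝ → ℝ≥0∞) : ℝ≥0∞ :=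
  if q = ∞ then ⨆ t ∈ Ioi (0 : ℝ), F t
  else (∫⁻ t in Ioi (0 : ℝ), F t ^ q.toReal * ENNReal.ofReal (1 / t)) ^ (1 / q.toReal)

/-- `(Σ_{k ∈ ℤ} (F k)^q)^{1/q}`, with the usual modification when `q = ∞`. -/
def seqNorm (q : ℝ≥0∞) (F : ℤ → ℝ≥0∞) : ℝ≥0∞ :=
  if q = ∞ then ⨆ k, F k
  else (∑' k, F k ^ q.toReal) ^ (1 / q.toReal)

/-- The `L^p` (quasi-)norm of an `ℝ≥0∞`-valued function, `p ∈ (0,∞]`. -/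
def lpNormE (μ : Measure X) (f : X → ℝ≥0∞) (p : ℝ≥0∞) : ℝ≥0∞ :=
  if p = ∞ then essSup f μ
  else (∫⁻ x, f x ^ p.toReal ∂μ) ^ (1 / p.toReal)

/-- `(∫_X ⨍_{B(x,t)} |u(x)-u(y)|^p dμ(y) dμ(x))^{1/p}`, with the usual modification
when `p = ∞`. -/
def besovKernel (μ : Measure X) (p : ℝ≥0∞) (u : X → ℝ) (t : ℝ) : ℝ≥0∞ :=
  if p = ∞ then
    essSup (fun x => essSup (fun y => ENNReal.ofReal |u x - u y|) (μ.restrict (ball x t))) μ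
  else
    (∫⁻ x, (⨍⁻ y in ball x t, ENNReal.ofReal |u x - u y| ^ p.toReal ∂μ) ∂μ) ^ (1 / p.toReal)

/-- The homogeneous Besov (quasi-)norm `‖u‖_{Ḃ^s_{p,q}(X)}`. -/
def besovNorm (μ : Measure X) (s : ℝ) (p q : ℝ≥0∞) (u : X → ℝ) : ℝ≥0∞ :=
  timeNorm q (fun t => ENNReal.ofReal t ^ (-s) * besovKernel μ p u t)

/-- Membership in the homogeneous Besov space `Ḃ^s_{p,q}(X)`. -/
def MemBesov (μ : Measure X) (s : ℝ) (p q : ℝ≥0∞) (u : X → ℝ) : Prop :=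
  MemLocLp μ u p ∧ besovNorm μ s p q u < ∞

/-- `C^{s,σ}_t(u)(x) = t^{-s} (⨍_{B(x,t)} |u(x)-u(y)|^σ dμ(y))^{1/σ}`. -/
def CFun (μ : Measure X) (s σ : ℝ) (u : X → ℝ) (t : ℝ) (x : X) : ℝ≥0∞ :=
  ENNReal.ofReal t ^ (-s) *
    (⨍⁻ y in ball x t, ENNReal.ofReal |u x - u y| ^ σ ∂μ) ^ (1 / σ)

/-- `A^{s,σ}_t(u)(x) = t^{-s} (⨍_{B(x,t)} |u(y)-u_{B(x,t)}|^σ dμ(y))^{1/σ}`. -/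
def AFun (μ : Measure X) (s σ : ℝ) (u : X → ℝ) (t : ℝ) (x : X) : ℝ≥0∞ :=
  ENNReal.ofReal t ^ (-s) *
    (⨍⁻ y in ball x t,
      ENNReal.ofReal |u y - ⨍ z in ball x t, u z ∂μ| ^ σ ∂μ) ^ (1 / σ)

/-- `I^{s,σ}_t(u)(x) = t^{-s} (inf_c ⨍_{B(x,t)} |u(y)-c|^σ dμ(y))^{1/σ}`. -/
def IFun (μ : Measure X) (s σ : ℝ) (u : X → ℝ) (t : ℝ) (x : X) : ℝ≥0∞ :=
  ENNReal.ofReal t ^ (-s) *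
    (⨅ c : ℝ, ⨍⁻ y in ball x t, ENNReal.ofReal |u y - c| ^ σ ∂μ) ^ (1 / σ)

/-- `S^{s,ε,σ}_t(u)(x) = t^{ε-s} sup_{0<r≤t} r^{-ε} (inf_c ⨍_{B(x,r)} |u(y)-c|^σ dμ(y))^{1/σ}`. -/
def SFun (μ : Measure X) (s ε σ : ℝ) (u : X → ℝ) (t : ℝ) (x : X) : ℝ≥0∞ :=
  ENNReal.ofReal t ^ (ε - s) *
    ⨆ r ∈ Ioc (0 : ℝ) t,
      ENNReal.ofReal r ^ (-ε) *
        (⨅ c : ℝ, ⨍⁻ y in ball x r, ENNReal.ofReal |u y - c| ^ σ ∂μ) ^ (1 / σ)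

/-- The (quasi-)norm of the Besov-type space `EḂ_{p,q}(X)` associated with a family of
functionals `E_t`. -/
def eBesovNorm (μ : Measure X) (p q : ℝ≥0∞) (E : ℝ → X → ℝ≥0∞) : ℝ≥0∞ :=
  timeNorm q (fun t => lpNormE μ (E t) p)

/-- The critical exponent `p_*(s) = np/(n-ps)` if `p < n/s`, and `∞` otherwise,
for `p ∈ (0,∞]`. -/
def pStar (n : ℝ) (p : ℝ≥0∞) (s : ℝ) : ℝ≥0∞ :=
  if p < ENNReal.ofReal (n / s) then ENNReal.ofReal (n * p.toReal / (n - p.toReal * s)) else ∞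

/-- `⃗g = {g_k}_{k ∈ ℤ}` is a fractional `s`-Hajłasz gradient of `u`. -/
def IsFracHajlaszGrad (μ : Measure X) (s : ℝ) (u : X → ℝ) (g : ℤ → X → ℝ≥0∞) : Prop :=
  (∀ k, Measurable (g k)) ∧
  ∃ E : Set X, μ E = 0 ∧
    ∀ (k : ℤ) (x y : X), x ∉ E → y ∉ E →
      2 ^ (-(k : ℝ) - 1) ≤ dist x y → dist x y < 2 ^ (-(k : ℝ)) →
      ENNReal.ofReal |u x - u y| ≤ ENNReal.ofReal (dist x y ^ s) * (g k x + g k y)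

/-- The Hajłasz–Besov (quasi-)norm `‖u‖_{Ṅ^s_{p,q}(X)}`. -/
def hajlaszBesovNorm (μ : Measure X) (s : ℝ) (p q : ℝ≥0∞) (u : X → ℝ) : ℝ≥0∞ :=
  ⨅ g ∈ {g : ℤ → X → ℝ≥0∞ | IsFracHajlaszGrad μ s u g},
    seqNorm q (fun k => lpNormE μ (g k) p)

/-- `g` is an `s`-gradient of `u`. -/
def IsSGrad (μ : Measure X) (s : ℝ) (u : X → ℝ) (g : X → ℝ≥0∞) : Prop :=
  Measurable g ∧
  ∃ E : Set X, μ E = 0 ∧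
    ∀ x y : X, x ∉ E → y ∉ E →
      ENNReal.ofReal |u x - u y| ≤ ENNReal.ofReal (dist x y ^ s) * (g x + g y)

/-- The Hajłasz–Sobolev (quasi-)norm `‖u‖_{Ṁ^{s,p}(X)}`. -/
def hajlaszSobolevNorm (μ : Measure X) (s : ℝ) (p : ℝ≥0∞) (u : X → ℝ) : ℝ≥0∞ :=
  ⨅ g ∈ {g : X → ℝ≥0∞ | IsSGrad μ s u g}, lpNormE μ g p

/-- The Hajłasz–Triebel–Lizorkin (quasi-)norm `‖u‖_{Ṁ^s_{p,q}(X)}`. -/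
def hajlaszTLNorm (μ : Measure X) (s : ℝ) (p q : ℝ≥0∞) (u : X → ℝ) : ℝ≥0∞ :=
  ⨅ g ∈ {g : ℤ → X → ℝ≥0∞ | IsFracHajlaszGrad μ s u g},
    if p = ∞ ∧ q ≠ ∞ then
      ⨆ (k : ℤ) (x : X),
        (∑' j : {j : ℤ // k ≤ j},
            ⨍⁻ y in ball x (2 ^ (-(k : ℝ))), g j.1 y ^ q.toReal ∂μ) ^ (1 / q.toReal)
    else lpNormE μ (fun x => seqNorm q (fun k => g k x)) p

/-- The (quasi-)norm of the Triebel–Lizorkin-type space `EḞ_{p,q}(X)` associated with a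
family of functionals `E_t`. -/
def eTLNorm (μ : Measure X) (p q : ℝ≥0∞) (E : ℝ → X → ℝ≥0∞) : ℝ≥0∞ :=
  if p = ∞ then
    if q = ∞ then eBesovNorm μ ∞ ∞ E
    else
      ⨆ (x : X) (r : ℝ) (_ : 0 < r),
        (∫⁻ t in Ioc (0 : ℝ) r,
            (⨍⁻ y in ball x r, E t y ^ q.toReal ∂μ) * ENNReal.ofReal (1 / t)) ^ (1 / q.toReal)
  else lpNormE μ (fun x => timeNorm q (fun t => E t x)) p

/-- `inf_c (⨍_{B(x,r)} |u(y)-c|^e dμ(y))^{1/e}` for `e ∈ (0,∞]`, with the usual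
modification when `e = ∞`. -/
def infLpAvg (μ : Measure X) (u : X → ℝ) (x : X) (r : ℝ) (e : ℝ≥0∞) : ℝ≥0∞ :=
  ⨅ c : ℝ,
    if e = ∞ then essSup (fun y => ENNReal.ofReal |u y - c|) (μ.restrict (ball x r))
    else (⨍⁻ y in ball x r, ENNReal.ofReal |u y - c| ^ e.toReal ∂μ) ^ (1 / e.toReal)

/-- The Hardy–Littlewood maximal function of an `ℝ≥0∞`-valued function. -/
def maximalFn (μ : Measure X) (f : X → ℝ≥0∞) (x : X) : ℝ≥0∞ :=
  ⨆ t ∈ Ioi (0 : ℝ), ⨍⁻ y in ball x t, f y ∂μ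

/-- `M_δ(f) = (M(f^δ))^{1/δ}`. -/
def maximalDelta (μ : Measure X) (δ : ℝ) (f : X → ℝ≥0∞) (x : X) : ℝ≥0∞ :=
  maximalFn μ (fun y => f y ^ δ) x ^ (1 / δ)

/-- The median value `m_u(B)` of `u` on a set `B`. -/
def medianVal (μ : Measure X) (u : X → ℝ) (B : Set X) : ℝ :=
  sSup {a : ℝ | μ ({x ∈ B | u x < a}) ≤ μ B / 2}

/-- The fractional sharp maximal function
`u^{♯,s}_σ(x) = sup_{t>0} t^{-s} (inf_c ⨍_{B(x,t)} |u(z)-c|^σ dμ(z))^{1/σ}`. -/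
def sharpMaxSigma (μ : Measure X) (s σ : ℝ) (u : X → ℝ) (x : X) : ℝ≥0∞ :=
  ⨆ t ∈ Ioi (0 : ℝ),
    ENNReal.ofReal t ^ (-s) *
      (⨅ c : ℝ, ⨍⁻ z in ball x t, ENNReal.ofReal |u z - c| ^ σ ∂μ) ^ (1 / σ)

/-- The fractional sharp maximal function
`u^{♯,s}(x) = sup_{t>0} t^{-s} ⨍_{B(x,t)} |u(z)-u_{B(x,t)}| dμ(z)`. -/
def sharpMax (μ : Measure X) (s : ℝ) (u : X → ℝ) (x : X) : ℝ≥0∞ :=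
  ⨆ t ∈ Ioi (0 : ℝ),
    ENNReal.ofReal t ^ (-s) *
      ⨍⁻ z in ball x t, ENNReal.ofReal |u z - ⨍ w in ball x t, u w ∂μ| ∂μ

/-!
With `α = n / σ` we have `u = (min ‖x‖ 1) ^ (-α)`, so `|u| ^ σ = ‖x‖ ^ (-n)` on the unit ball,
which is not integrable there.

For the Besov norm, write `K(t) = (∫ ⨍_{B(x,t)} |u x - u y| ^ p dy dx) ^ (1/p)`. The hypothesis on
`σ` says `(α + s) p < n`, so `u - 1 ∈ L^p`, and `|u x - u y| ≤ |u x - 1| + |u y - 1|` together with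
Fubini gives `K(t) ≲ ‖u - 1‖_p` for all `t`. Pick `θ ∈ (s, 1]` with `(α + θ) p < n`. The elementary
estimate `|u x - u y| ≲ |x - y| ^ θ (‖x‖ ^ (-(α + θ)) + ‖y‖ ^ (-(α + θ)))` for `|x - y| ≤ 1`
and the same Fubini argument give `K(t) ≲ t ^ θ` for `t ≤ 1`. Hence `t ^ (-s) K(t)` is bounded by a
multiple of `t ^ (θ - s)` near `0` and of `t ^ (-s)` near `∞`, which lies in `L^q(dt/t)` for every
`q`.
-/

lemma one_sub_rpow_le_max_mul {r α : ℝ} (hr0 : 0 ≤ r) (hr1 : r ≤ 1) (hα : 0 ≤ α) :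
    1 - r ^ α ≤ max 1 α * (1 - r) := by
  rcases le_total α 1 with h | h
  · have : r ≤ r ^ α := by simpa using Real.rpow_le_rpow_of_exponent_ge' hr0 hr1 hα h
    nlinarith [le_max_left 1 α]
  · have := one_add_mul_self_le_rpow_one_add (by linarith : -1 ≤ r - 1) h
    rw [add_sub_cancel] at this
    nlinarith [le_max_right 1 α]

lemma min_one_le_rpow {x θ : ℝ} (hx : 0 ≤ x) (hθ0 : 0 ≤ θ) (hθ1 : θ ≤ 1) : min 1 x ≤ x ^ θ := by
  rcases le_total x 1 with h | h
  · simpa [min_eq_right h] using Real.rpow_le_rpow_of_exponent_ge' hx h hθ0 hθ1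
  · exact (min_le_left _ _).trans (Real.one_le_rpow h hθ0)

lemma rpow_neg_sub_rpow_neg_le {a b α θ : ℝ} (ha : 0 < a) (hab : a ≤ b) (hα : 0 ≤ α)
    (hθ0 : 0 ≤ θ) (hθ1 : θ ≤ 1) :
    a ^ (-α) - b ^ (-α) ≤ max 1 α * (b - a) ^ θ * a ^ (-(α + θ)) := by
  have hb : 0 < b := ha.trans_le hab
  have hsplit : a ^ (-α) - b ^ (-α) = a ^ (-α) * (1 - (a / b) ^ α) := by
    rw [Real.div_rpow ha.le hb.le, Real.rpow_neg ha.le, Real.rpow_neg hb.le]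
    field_simp
  have hratio : 1 - (a / b) ^ α ≤ max 1 α * ((b - a) / a) ^ θ := by
    calc 1 - (a / b) ^ α ≤ max 1 α * min 1 ((b - a) / a) := by
          rw [mul_min_of_nonneg _ _ (by positivity), mul_one]
          refine le_min ?_ ?_
          · linarith [le_max_left 1 α, Real.rpow_nonneg (div_pos ha hb).le α]
          · refine (one_sub_rpow_le_max_mul (div_pos ha hb).le ((div_le_one hb).2 hab) hα).trans ?_
            gcongr
            rw [one_sub_div hb.ne']
            gcongr
      _ ≤ max 1 α * ((b - a) / a) ^ θ := by
          gcongr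
          exact min_one_le_rpow (div_nonneg (sub_nonneg.2 hab) ha.le) hθ0 hθ1
  calc a ^ (-α) - b ^ (-α) ≤ a ^ (-α) * (max 1 α * ((b - a) / a) ^ θ) := by
        rw [hsplit]; gcongr
    _ = max 1 α * (b - a) ^ θ * a ^ (-(α + θ)) := by
        rw [Real.div_rpow (sub_nonneg.2 hab) ha.le, Real.rpow_neg ha.le, Real.rpow_neg ha.le,
          Real.rpow_add ha]
        field_simp

lemma abs_min_one_rpow_neg_sub_le {a b α θ : ℝ} (ha : 0 ≤ a) (hb : 0 ≤ b) (hab : |a - b| ≤ 1)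
    (hα : 0 < α) (hθ0 : 0 ≤ θ) (hθ1 : θ ≤ 1) :
    |min a 1 ^ (-α) - min b 1 ^ (-α)| ≤
      max 1 α * |a - b| ^ θ * (a ^ (-(α + θ)) + b ^ (-(α + θ))) := by
  wlog hle : a ≤ b generalizing a b
  · have := this hb ha (by rwa [abs_sub_comm]) (le_of_not_ge hle)
    rwa [abs_sub_comm, abs_sub_comm b, add_comm] at this
  rw [abs_sub_comm a, abs_of_nonneg (sub_nonneg.2 hle)] at hab ⊢
  rcases ha.eq_or_lt with rfl | ha'
  · -- `0 ^ (-α) = 0`, so at the origin only the `b`-term is needed.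
    rw [sub_zero] at hab
    rw [min_eq_left zero_le_one, Real.zero_rpow (by linarith), zero_sub, abs_neg, min_eq_left hab,
      abs_of_nonneg (Real.rpow_nonneg hb _), Real.zero_rpow (by linarith), zero_add, sub_zero,
      mul_assoc, ← Real.rpow_add' hb (by linarith), show θ + -(α + θ) = -α by ring]
    exact le_mul_of_one_le_left (Real.rpow_nonneg hb _) (le_max_left _ _)
  rcases le_or_gt 1 a with ha1 | ha1
  · rw [min_eq_right ha1, min_eq_right (ha1.trans hle), sub_self, abs_zero]
    positivity
  have ham : a ≤ min b 1 := le_min hle ha1.le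
  rw [min_eq_left ha1.le,
    abs_of_nonneg (sub_nonneg.2 (Real.rpow_le_rpow_of_nonpos ha' ham (by linarith)))]
  calc a ^ (-α) - min b 1 ^ (-α) ≤ max 1 α * (min b 1 - a) ^ θ * a ^ (-(α + θ)) :=
        rpow_neg_sub_rpow_neg_le ha' ham hα.le hθ0 hθ1
    _ ≤ max 1 α * (b - a) ^ θ * a ^ (-(α + θ)) := by
        gcongr
        exact min_le_left _ _
    _ ≤ _ := by
        gcongr
        exact le_add_of_nonneg_right (Real.rpow_nonneg hb _)

lemma setLIntegral_rpow_mul_ofReal_inv_lt_top {s : Set ℝ} (hs : MeasurableSet s)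
    (hs0 : s ⊆ Ioi 0) {F : ℝ → ℝ≥0∞} {D : ℝ≥0∞} (hD : D ≠ ∞) {e q : ℝ} (hq : 0 ≤ q)
    (hF : ∀ t ∈ s, F t ≤ D * ENNReal.ofReal t ^ e)
    (hint : IntegrableOn (fun t => t ^ (e * q - 1)) s) :
    ∫⁻ t in s, F t ^ q * ENNReal.ofReal (1 / t) < ∞ := by
  have hDq : D ^ q ≠ ∞ := ENNReal.rpow_ne_top_of_nonneg hq hD
  calc ∫⁻ t in s, F t ^ q * ENNReal.ofReal (1 / t)
      ≤ ∫⁻ t in s, D ^ q * ENNReal.ofReal (t ^ (e * q - 1)) := by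
        refine setLIntegral_mono' hs fun t ht => ?_
        have ht0 : 0 < t := hs0 ht
        calc F t ^ q * ENNReal.ofReal (1 / t)
            ≤ (D * ENNReal.ofReal t ^ e) ^ q * ENNReal.ofReal (1 / t) := by gcongr; exact hF t ht
          _ = D ^ q * ENNReal.ofReal (t ^ (e * q - 1)) := by
              rw [ENNReal.mul_rpow_of_nonneg _ _ hq, ← ENNReal.rpow_mul,
                ENNReal.ofReal_rpow_of_pos ht0, mul_assoc, ← ENNReal.ofReal_mul (by positivity),
                Real.rpow_sub_one ht0.ne', mul_one_div]
    _ = D ^ q * ∫⁻ t in s, ENNReal.ofReal (t ^ (e * q - 1)) := lintegral_const_mul' _ _ hDq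
    _ < ∞ := ENNReal.mul_lt_top hDq.lt_top hint.lintegral_lt_top

lemma timeNorm_lt_top {q : ℝ≥0∞} (hq : 0 < q) {a b : ℝ} (ha : 0 < a) (hb : 0 < b)
    {F : ℝ → ℝ≥0∞} {D : ℝ≥0∞} (hD : D ≠ ∞)
    (h₀ : ∀ t ∈ Ioc (0 : ℝ) 1, F t ≤ D * ENNReal.ofReal t ^ a)
    (h₁ : ∀ t ∈ Ioi (1 : ℝ), F t ≤ D * ENNReal.ofReal t ^ (-b)) :
    timeNorm q F < ∞ := by
  rw [timeNorm]
  split_ifs with hq_top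
  · refine lt_of_le_of_lt (iSup₂_le fun t ht => ?_) hD.lt_top
    rcases le_or_gt t 1 with ht1 | ht1
    · exact (h₀ t ⟨ht, ht1⟩).trans (mul_le_of_le_one_right' (ENNReal.rpow_le_one
        (ENNReal.ofReal_le_one.2 ht1) ha.le))
    · exact (h₁ t ht1).trans (mul_le_of_le_one_right' (ENNReal.rpow_le_one_of_one_le_of_neg
        (ENNReal.one_le_ofReal.2 ht1.le) (neg_lt_zero.2 hb)))
  · have hq' : 0 < q.toReal := ENNReal.toReal_pos hq.ne' hq_top
    refine ENNReal.rpow_lt_top_of_nonneg (by positivity) (ne_of_lt ?_)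
    rw [← Ioc_union_Ioi_eq_Ioi zero_le_one,
      lintegral_union measurableSet_Ioi (Ioc_disjoint_Ioi le_rfl)]
    refine ENNReal.add_lt_top.2 ⟨?_, ?_⟩
    · refine setLIntegral_rpow_mul_ofReal_inv_lt_top measurableSet_Ioc Ioc_subset_Ioi_self hD
        hq'.le h₀ ?_
      exact (intervalIntegrable_iff_integrableOn_Ioc_of_le zero_le_one).1
        (intervalIntegral.intervalIntegrable_rpow' (by nlinarith))
    · exact setLIntegral_rpow_mul_ofReal_inv_lt_top measurableSet_Ioi
        (Ioi_subset_Ioi zero_le_one) hD hq'.le h₁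
        (integrableOn_Ioi_rpow_of_lt (by nlinarith) one_pos)

lemma besovNorm_lt_top_of_besovKernel_le {Y : Type*} [MetricSpace Y] [MeasurableSpace Y]
    {μ : Measure Y} {s θ : ℝ} {p q : ℝ≥0∞} {u : Y → ℝ}
    (hq : 0 < q) (hs : 0 < s) (hsθ : s < θ) {D : ℝ≥0∞} (hD : D ≠ ∞)
    (h₀ : ∀ t ∈ Ioc (0 : ℝ) 1, besovKernel μ p u t ≤ D * ENNReal.ofReal t ^ θ)
    (h₁ : ∀ t ∈ Ioi (1 : ℝ), besovKernel μ p u t ≤ D) :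
    besovNorm μ s p q u < ∞ := by
  refine timeNorm_lt_top hq (sub_pos.2 hsθ) hs hD (fun t ht => ?_) (fun t ht => ?_)
  · calc ENNReal.ofReal t ^ (-s) * besovKernel μ p u t
        ≤ ENNReal.ofReal t ^ (-s) * (D * ENNReal.ofReal t ^ θ) := by gcongr; exact h₀ t ht
      _ = D * ENNReal.ofReal t ^ (θ - s) := by
        rw [mul_left_comm, ← ENNReal.rpow_add _ _ (ENNReal.ofReal_pos.2 ht.1).ne'
          ENNReal.ofReal_ne_top, neg_add_eq_sub]
  · calc ENNReal.ofReal t ^ (-s) * besovKernel μ p u t ≤ ENNReal.ofReal t ^ (-s) * D := by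
          gcongr; exact h₁ t ht
      _ = D * ENNReal.ofReal t ^ (-s) := mul_comm _ _

lemma memLocLp_of_memLp_sub_const {Y : Type*} [MetricSpace Y] [ProperSpace Y] [MeasurableSpace Y]
    {μ : Measure Y} [IsFiniteMeasureOnCompacts μ] {u : Y → ℝ} {p : ℝ≥0∞} {c : ℝ}
    (hu : MemLp (fun x => u x - c) p μ) : MemLocLp μ u p := by
  intro x r _
  have : IsFiniteMeasure (μ.restrict (ball x r)) :=
    isFiniteMeasure_restrict.2 measure_ball_lt_top.ne
  convert (hu.restrict (ball x r)).add (memLp_const c) using 1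
  ext y
  simp

lemma eLpNorm_ofReal_eq_lintegral {α : Type*} [MeasurableSpace α] {μ : Measure α} {p : ℝ}
    (hp : 0 < p) (f : α → ℝ) :
    eLpNorm f (ENNReal.ofReal p) μ = (∫⁻ x, ENNReal.ofReal |f x| ^ p ∂μ) ^ (1 / p) := by
  simp_rw [eLpNorm_eq_lintegral_rpow_enorm_toReal (ENNReal.ofReal_pos.2 hp).ne'
    ENNReal.ofReal_ne_top, ENNReal.toReal_ofReal hp.le, Real.enorm_eq_ofReal_abs]

lemma ofReal_abs_rpow_le_of_abs_le {r a b c p : ℝ} (hp : 0 ≤ p) (ha : 0 ≤ a) (hb : 0 ≤ b)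
    (hc : 0 ≤ c) (h : |r| ≤ a * (b + c)) :
    ENNReal.ofReal |r| ^ p ≤ LpAddConst (ENNReal.ofReal p)⁻¹ * ENNReal.ofReal a ^ p *
      (ENNReal.ofReal b ^ p + ENNReal.ofReal c ^ p) :=
  calc ENNReal.ofReal |r| ^ p ≤ (ENNReal.ofReal a * (ENNReal.ofReal b + ENNReal.ofReal c)) ^ p := by
        gcongr
        rw [← ENNReal.ofReal_add hb hc, ← ENNReal.ofReal_mul ha]
        exact ENNReal.ofReal_le_ofReal h
    _ = ENNReal.ofReal a ^ p * (ENNReal.ofReal b + ENNReal.ofReal c) ^ p :=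
        ENNReal.mul_rpow_of_nonneg _ _ hp
    _ ≤ ENNReal.ofReal a ^ p * (LpAddConst (ENNReal.ofReal p)⁻¹ *
          (ENNReal.ofReal b ^ p + ENNReal.ofReal c ^ p)) := by
        gcongr
        exact ENNReal.rpow_add_le_mul_rpow_add_rpow' _ _ hp
    _ = _ := by ring

section Haar

variable {E : Type*} [NormedAddCommGroup E] [NormedSpace ℝ E] [FiniteDimensional ℝ E]
  [MeasurableSpace E] [BorelSpace E] (μ : Measure E) [μ.IsAddHaarMeasure]

lemma integrableOn_ball_norm_rpow_neg_iff [Nontrivial E] {β R : ℝ} (hR : 0 < R) :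
    IntegrableOn (fun x : E => ‖x‖ ^ (-β)) (ball 0 R) μ ↔ β < Module.finrank ℝ E := by
  have hd : 1 ≤ Module.finrank ℝ E := Module.finrank_pos
  rw [integrableOn_fun_norm_addHaar μ (f := fun y => y ^ (-β)),
    integrableOn_congr_fun (g := fun y => y ^ ((Module.finrank ℝ E : ℝ) - 1 - β)) _
      measurableSet_Ioo, intervalIntegral.integrableOn_Ioo_rpow_iff hR]
  · constructor <;> intro h <;> linarith
  · intro y hy
    dsimp only
    rw [smul_eq_mul, ← Real.rpow_natCast, Nat.cast_sub hd, Nat.cast_one,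
      ← Real.rpow_add hy.1, ← sub_eq_add_neg]

lemma setLIntegral_ball_norm_rpow_neg_lt_top_iff [Nontrivial E] {β R : ℝ} (hR : 0 < R) :
    ∫⁻ x in ball (0 : E) R, ENNReal.ofReal (‖x‖ ^ (-β)) ∂μ < ∞ ↔ β < Module.finrank ℝ E := by
  rw [← integrableOn_ball_norm_rpow_neg_iff μ hR, IntegrableOn, Integrable,
    hasFiniteIntegral_iff_ofReal (.of_forall fun x => Real.rpow_nonneg (norm_nonneg x) _)]
  exact (and_iff_right (measurable_norm.pow_const _).aestronglyMeasurable).symm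

lemma lintegral_setLIntegral_ball {g : E → ℝ≥0∞} (hg : Measurable g) (t : ℝ) :
    ∫⁻ x, ∫⁻ y in ball x t, g y ∂μ ∂μ = μ (ball 0 t) * ∫⁻ y, g y ∂μ := by
  have htranslate : ∀ x, ∫⁻ y in ball x t, g y ∂μ = ∫⁻ z in ball 0 t, g (x + z) ∂μ := fun x => by
    rw [← (measurePreserving_add_left μ x).setLIntegral_comp_preimage_emb
      (measurableEmbedding_addLeft x), preimage_add_ball, sub_self]
  simp_rw [htranslate]
  rw [lintegral_lintegral_swap (f := fun x z => g (x + z)) (hg.comp measurable_add).aemeasurable]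
  simp_rw [lintegral_add_right_eq_self (μ := μ) g]
  rw [setLIntegral_const, mul_comm]

lemma lintegral_setLAverage_ball_le {F : E → E → ℝ≥0∞} {g : E → ℝ≥0∞} {A : ℝ≥0∞} {t : ℝ}
    (hA : A ≠ ∞) (ht : 0 < t) (hg : Measurable g)
    (hF : ∀ x y, dist y x < t → F x y ≤ A * (g x + g y)) :
    ∫⁻ x, ⨍⁻ y in ball x t, F x y ∂μ ∂μ ≤ 2 * A * ∫⁻ y, g y ∂μ := by
  set c := μ (ball (0 : E) t)
  have hc0 : c ≠ 0 := (measure_ball_pos μ 0 ht).ne'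
  have hc : c ≠ ∞ := measure_ball_lt_top.ne
  have hinner : ∀ x, ∫⁻ y in ball x t, F x y ∂μ ≤ A * (g x * c + ∫⁻ y in ball x t, g y ∂μ) :=
    fun x => calc
      ∫⁻ y in ball x t, F x y ∂μ ≤ ∫⁻ y in ball x t, A * (g x + g y) ∂μ :=
        setLIntegral_mono' measurableSet_ball fun y hy => hF x y hy
      _ = A * (g x * c + ∫⁻ y in ball x t, g y ∂μ) := by
        rw [lintegral_const_mul' _ _ hA, lintegral_add_left measurable_const, setLIntegral_const,
          Measure.addHaar_ball_center]
  calc ∫⁻ x, ⨍⁻ y in ball x t, F x y ∂μ ∂μ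
      = (∫⁻ x, ∫⁻ y in ball x t, F x y ∂μ ∂μ) * c⁻¹ := by
        simp_rw [setLAverage_eq, Measure.addHaar_ball_center, div_eq_mul_inv]
        exact lintegral_mul_const' _ _ (ENNReal.inv_ne_top.2 hc0)
    _ ≤ (∫⁻ x, A * (g x * c + ∫⁻ y in ball x t, g y ∂μ) ∂μ) * c⁻¹ := by
        gcongr with x; exact hinner x
    _ = 2 * A * ∫⁻ y, g y ∂μ := by
        rw [lintegral_const_mul' _ _ hA, lintegral_add_left (hg.mul_const c),
          lintegral_mul_const _ hg, lintegral_setLIntegral_ball μ hg, mul_comm c, ← two_mul,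
          mul_assoc, mul_assoc, mul_assoc, ENNReal.mul_inv_cancel hc0 hc, mul_one]
        ring

lemma besovKernel_le_of_le {u : E → ℝ} {p t : ℝ} (hp : 0 < p) (ht : 0 < t) {g : E → ℝ≥0∞}
    {A : ℝ≥0∞} (hA : A ≠ ∞) (hg : Measurable g)
    (h : ∀ x y, dist y x < t → ENNReal.ofReal |u x - u y| ^ p ≤ A * (g x + g y)) :
    besovKernel μ (ENNReal.ofReal p) u t ≤ (2 * A * ∫⁻ y, g y ∂μ) ^ (1 / p) := by
  rw [besovKernel, if_neg ENNReal.ofReal_ne_top, ENNReal.toReal_ofReal hp.le]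
  exact ENNReal.rpow_le_rpow (lintegral_setLAverage_ball_le μ hA ht hg h) (by positivity)

lemma besovKernel_le_eLpNorm_sub_const {u : E → ℝ} {p t : ℝ} (hp : 0 < p) (ht : 0 < t)
    (hu : Measurable u) (c : ℝ) :
    besovKernel μ (ENNReal.ofReal p) u t ≤
      (2 * LpAddConst (ENNReal.ofReal p)⁻¹) ^ (1 / p) *
        eLpNorm (fun x => u x - c) (ENNReal.ofReal p) μ := by
  refine (besovKernel_le_of_le μ hp ht (LpAddConst_lt_top (ENNReal.ofReal p)⁻¹).ne
    (g := fun x => ENNReal.ofReal |u x - c| ^ p) (by fun_prop) fun x y _ => ?_).trans_eq ?_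
  · have := ofReal_abs_rpow_le_of_abs_le hp.le zero_le_one (abs_nonneg (u x - c))
      (abs_nonneg (u y - c)) (r := u x - u y) (by
        rw [one_mul, abs_sub_comm (u y)]; exact abs_sub_le _ _ _)
    rwa [ENNReal.ofReal_one, ENNReal.one_rpow, mul_one] at this
  · rw [eLpNorm_ofReal_eq_lintegral hp, ENNReal.mul_rpow_of_nonneg _ _ (by positivity)]

end Haar

section TruncatedRadialPower

variable {E : Type*} [NormedAddCommGroup E]

def truncatedRadialPower (α : ℝ) (x : E) : ℝ := if ‖x‖ < 1 then ‖x‖ ^ (-α) else 1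

lemma truncatedRadialPower_eq_min_rpow (α : ℝ) (x : E) :
    truncatedRadialPower α x = min ‖x‖ 1 ^ (-α) := by
  unfold truncatedRadialPower
  split_ifs with hx
  · rw [min_eq_left hx.le]
  · rw [min_eq_right (not_lt.1 hx), Real.one_rpow]

lemma measurable_truncatedRadialPower [MeasurableSpace E] [BorelSpace E] (α : ℝ) :
    Measurable (truncatedRadialPower α : E → ℝ) :=
  Measurable.ite (measurableSet_lt measurable_norm measurable_const)
    (measurable_norm.pow_const _) measurable_const

lemma abs_truncatedRadialPower_sub_le {α θ : ℝ} (hα : 0 < α) (hθ0 : 0 ≤ θ) (hθ1 : θ ≤ 1)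
    {x y : E} (hxy : dist x y ≤ 1) :
    |truncatedRadialPower α x - truncatedRadialPower α y| ≤
      max 1 α * dist x y ^ θ * (‖x‖ ^ (-(α + θ)) + ‖y‖ ^ (-(α + θ))) := by
  have hnorm : |‖x‖ - ‖y‖| ≤ dist x y := dist_eq_norm x y ▸ abs_norm_sub_norm_le x y
  rw [truncatedRadialPower_eq_min_rpow, truncatedRadialPower_eq_min_rpow]
  refine (abs_min_one_rpow_neg_sub_le (norm_nonneg x) (norm_nonneg y) (hnorm.trans hxy) hα hθ0
    hθ1).trans ?_
  gcongr

lemma ofReal_norm_rpow_neg_rpow (x : E) (β : ℝ) {p : ℝ} (hp : 0 ≤ p) :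
    ENNReal.ofReal (‖x‖ ^ (-β)) ^ p = ENNReal.ofReal (‖x‖ ^ (-(β * p))) := by
  rw [ENNReal.ofReal_rpow_of_nonneg (by positivity) hp, ← Real.rpow_mul (norm_nonneg x), neg_mul]

lemma ofReal_abs_truncatedRadialPower_sub_one_rpow_le {α p : ℝ} (hp : 0 < p) (x : E) :
    ENNReal.ofReal |truncatedRadialPower α x - 1| ^ p ≤
      (ball (0 : E) 1).indicator (fun x => 1 + ENNReal.ofReal (‖x‖ ^ (-(α * p)))) x := by
  unfold truncatedRadialPower
  split_ifs with hx
  · rw [indicator_of_mem (mem_ball_zero_iff.2 hx), ← ofReal_norm_rpow_neg_rpow x α hp.le]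
    have hr : 0 ≤ ‖x‖ ^ (-α) := by positivity
    rcases le_total (‖x‖ ^ (-α)) 1 with h | h
    · calc ENNReal.ofReal |‖x‖ ^ (-α) - 1| ^ p ≤ ENNReal.ofReal 1 ^ p := by
            gcongr; exact abs_sub_le_iff.2 ⟨by linarith, by linarith⟩
        _ ≤ _ := by rw [ENNReal.ofReal_one, ENNReal.one_rpow]; exact le_self_add
    · calc ENNReal.ofReal |‖x‖ ^ (-α) - 1| ^ p ≤ ENNReal.ofReal (‖x‖ ^ (-α)) ^ p := by
            gcongr; exact abs_sub_le_iff.2 ⟨by linarith, by linarith⟩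
        _ ≤ _ := le_add_self
  · rw [sub_self, abs_zero, ENNReal.ofReal_zero, ENNReal.zero_rpow_of_pos hp]
    exact zero_le

end TruncatedRadialPower

section HaarTruncatedRadialPower

variable {E : Type*} [NormedAddCommGroup E] [NormedSpace ℝ E] [FiniteDimensional ℝ E]
  [MeasurableSpace E] [BorelSpace E] (μ : Measure E) [μ.IsAddHaarMeasure]

lemma memLp_truncatedRadialPower_sub_one [Nontrivial E] {α p : ℝ} (hp : 0 < p)
    (hαp : α * p < Module.finrank ℝ E) :
    MemLp (fun x => truncatedRadialPower α x - 1) (ENNReal.ofReal p) μ := by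
  refine ⟨((measurable_truncatedRadialPower α).sub_const 1).aestronglyMeasurable, ?_⟩
  rw [eLpNorm_ofReal_eq_lintegral hp]
  refine ENNReal.rpow_lt_top_of_nonneg (by positivity) (ne_of_lt ?_)
  calc ∫⁻ x, ENNReal.ofReal |truncatedRadialPower α x - 1| ^ p ∂μ
      ≤ ∫⁻ x in ball 0 1, 1 + ENNReal.ofReal (‖x‖ ^ (-(α * p))) ∂μ := by
        rw [← lintegral_indicator measurableSet_ball]
        exact lintegral_mono (ofReal_abs_truncatedRadialPower_sub_one_rpow_le hp)
    _ = μ (ball 0 1) + ∫⁻ x in ball 0 1, ENNReal.ofReal (‖x‖ ^ (-(α * p))) ∂μ := by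
        rw [lintegral_add_left measurable_const, setLIntegral_const, one_mul]
    _ < ∞ := ENNReal.add_lt_top.2
        ⟨measure_ball_lt_top, (setLIntegral_ball_norm_rpow_neg_lt_top_iff μ one_pos).2 hαp⟩

lemma besovKernel_truncatedRadialPower_le_rpow [Nontrivial E] {α θ p : ℝ} (hα : 0 < α)
    (hθ0 : 0 ≤ θ) (hθ1 : θ ≤ 1) (hp : 0 < p) (hαθp : (α + θ) * p < Module.finrank ℝ E) :
    ∃ D ≠ ∞, ∀ t ∈ Ioc (0 : ℝ) 1,
      besovKernel μ (ENNReal.ofReal p) (truncatedRadialPower α) t ≤ D * ENNReal.ofReal t ^ θ := by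
  set K := LpAddConst (ENNReal.ofReal p)⁻¹
  set g : E → ℝ≥0∞ := (ball 0 2).indicator fun x => ENNReal.ofReal (‖x‖ ^ (-((α + θ) * p)))
  have hg : Measurable g :=
    (measurable_norm.pow_const _).ennreal_ofReal.indicator measurableSet_ball
  have hI : ∫⁻ x, g x ∂μ ≠ ∞ := by
    rw [lintegral_indicator measurableSet_ball]
    exact ((setLIntegral_ball_norm_rpow_neg_lt_top_iff μ two_pos).2 hαθp).ne
  have hK : K ≠ ∞ := (LpAddConst_lt_top _).ne
  refine ⟨(2 * K * ∫⁻ x, g x ∂μ) ^ (1 / p) * ENNReal.ofReal (max 1 α),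
    ENNReal.mul_ne_top (ENNReal.rpow_ne_top_of_nonneg (by positivity)
      (ENNReal.mul_ne_top (ENNReal.mul_ne_top ENNReal.ofNat_ne_top hK) hI)) ENNReal.ofReal_ne_top,
    fun t ht => ?_⟩
  have ht0 : 0 < t := ht.1
  have hpointwise : ∀ x y, dist y x < t → ENNReal.ofReal |truncatedRadialPower α x -
      truncatedRadialPower α y| ^ p ≤ K * ENNReal.ofReal (max 1 α * t ^ θ) ^ p * (g x + g y) := by
    intro x y hxy
    rw [dist_comm] at hxy
    by_cases hxy1 : ‖x‖ < 1 ∨ ‖y‖ < 1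
    · have hnorm := abs_le.1 (dist_eq_norm x y ▸ abs_norm_sub_norm_le x y)
      have hx2 : ‖x‖ < 2 := by rcases hxy1 with h | h <;> linarith [ht.2]
      have hy2 : ‖y‖ < 2 := by rcases hxy1 with h | h <;> linarith [ht.2]
      simp only [g, indicator_of_mem (mem_ball_zero_iff.2 hx2),
        indicator_of_mem (mem_ball_zero_iff.2 hy2), ← ofReal_norm_rpow_neg_rpow _ _ hp.le]
      refine ofReal_abs_rpow_le_of_abs_le hp.le (by positivity) (by positivity) (by positivity)
        ((abs_truncatedRadialPower_sub_le hα hθ0 hθ1 (hxy.le.trans ht.2)).trans ?_)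
      gcongr
    · push Not at hxy1
      rw [truncatedRadialPower, if_neg hxy1.1.not_gt, truncatedRadialPower, if_neg hxy1.2.not_gt,
        sub_self, abs_zero, ENNReal.ofReal_zero, ENNReal.zero_rpow_of_pos hp]
      exact zero_le
  calc besovKernel μ (ENNReal.ofReal p) (truncatedRadialPower α) t
      ≤ (2 * (K * ENNReal.ofReal (max 1 α * t ^ θ) ^ p) * ∫⁻ x, g x ∂μ) ^ (1 / p) :=
        besovKernel_le_of_le μ hp ht.1 (ENNReal.mul_ne_top hK (ENNReal.rpow_ne_top_of_nonneg
          hp.le ENNReal.ofReal_ne_top)) hg hpointwise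
    _ = (2 * K * ∫⁻ x, g x ∂μ) ^ (1 / p) * ENNReal.ofReal (max 1 α) * ENNReal.ofReal t ^ θ := by
        rw [show 2 * (K * ENNReal.ofReal (max 1 α * t ^ θ) ^ p) * ∫⁻ x, g x ∂μ =
            2 * K * (∫⁻ x, g x ∂μ) * ENNReal.ofReal (max 1 α * t ^ θ) ^ p by ring,
          ENNReal.mul_rpow_of_nonneg _ _ (by positivity), one_div, ENNReal.rpow_rpow_inv hp.ne',
          ENNReal.ofReal_mul (by positivity), ENNReal.ofReal_rpow_of_nonneg ht0.le hθ0]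
        ring

lemma memBesov_truncatedRadialPower {α s p : ℝ} {q : ℝ≥0∞} (hα : 0 < α) (hs0 : 0 < s)
    (hs1 : s < 1) (hp : 0 < p) (hq : 0 < q) (hαsp : (α + s) * p < Module.finrank ℝ E) :
    MemBesov μ s (ENNReal.ofReal p) q (truncatedRadialPower α) := by
  have : Nontrivial E := Module.nontrivial_of_finrank_pos (R := ℝ) (by
    have : (0 : ℝ) < Module.finrank ℝ E := lt_of_le_of_lt (by positivity) hαsp
    exact_mod_cast this)
  obtain ⟨θ, hsθ, hθ⟩ := exists_between (lt_min hs1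
    (lt_sub_iff_add_lt'.2 ((lt_div_iff₀ hp).2 hαsp)))
  have hαθp : (α + θ) * p < Module.finrank ℝ E :=
    (lt_div_iff₀ hp).1 (by linarith [min_le_right 1 (Module.finrank ℝ E / p - α)])
  obtain ⟨D₀, hD₀, h₀⟩ := besovKernel_truncatedRadialPower_le_rpow μ hα (by linarith)
    (hθ.le.trans (min_le_left _ _)) hp hαθp
  have hu := memLp_truncatedRadialPower_sub_one μ hp (α := α) (by nlinarith)
  set D₁ := (2 * LpAddConst (ENNReal.ofReal p)⁻¹) ^ (1 / p) *
    eLpNorm (fun x => truncatedRadialPower α x - 1) (ENNReal.ofReal p) μ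
  have hD₁ : D₁ ≠ ∞ := ENNReal.mul_ne_top (ENNReal.rpow_ne_top_of_nonneg (by positivity)
    (ENNReal.mul_ne_top ENNReal.ofNat_ne_top (LpAddConst_lt_top _).ne)) hu.eLpNorm_ne_top
  refine ⟨memLocLp_of_memLp_sub_const hu, besovNorm_lt_top_of_besovKernel_le hq hs0 hsθ
    (ENNReal.add_ne_top.2 ⟨hD₀, hD₁⟩) (fun t ht => (h₀ t ht).trans ?_) fun t ht => ?_⟩
  · gcongr; exact le_self_add
  · exact (besovKernel_le_eLpNorm_sub_const μ hp (one_pos.trans ht)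
      (measurable_truncatedRadialPower α) 1).trans le_add_self

lemma setLIntegral_ball_abs_truncatedRadialPower_rpow_eq_top [Nontrivial E] {σ : ℝ}
    (hσ : 0 < σ) :
    ∫⁻ x in ball (0 : E) 1,
      ENNReal.ofReal |truncatedRadialPower (Module.finrank ℝ E / σ) x| ^ σ ∂μ = ∞ := by
  rw [setLIntegral_congr_fun measurableSet_ball
    (g := fun x => ENNReal.ofReal (‖x‖ ^ (-(Module.finrank ℝ E : ℝ)))) fun x hx => ?_]
  · exact not_lt_top_iff.1 fun h =>
      lt_irrefl _ ((setLIntegral_ball_norm_rpow_neg_lt_top_iff μ one_pos).1 h)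
  · rw [truncatedRadialPower, if_pos (mem_ball_zero_iff.1 hx), abs_of_nonneg (by positivity),
      ofReal_norm_rpow_neg_rpow _ _ hσ.le, div_mul_cancel₀ _ hσ.ne']

end HaarTruncatedRadialPower

theorem statement4 (n : ℕ) (s p σ : ℝ) (hs0 : 0 < s) (hs1 : s < 1)
    (hp : 0 < p) (hpn : p < (n : ℝ) / s)
    (hσ : (n : ℝ) * p / ((n : ℝ) - p * s) < σ) :
    ∀ q : ℝ≥0∞, 0 < q →
      MemBesov (volume : Measure (EuclideanSpace ℝ (Fin n))) s (ENNReal.ofReal p) q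
        (fun x : EuclideanSpace ℝ (Fin n) => if ‖x‖ < 1 then ‖x‖ ^ (-((n : ℝ) / σ)) else 1) ∧
      ∫⁻ x in ball (0 : EuclideanSpace ℝ (Fin n)) 1,
          ENNReal.ofReal |(fun x : EuclideanSpace ℝ (Fin n) => if ‖x‖ < 1 then ‖x‖ ^ (-((n : ℝ) / σ)) else 1) x| ^ σ ∂volume = ∞ := by
  intro q hq
  have hps : p * s < n := (lt_div_iff₀ hs0).1 hpn
  have hn : (0 : ℝ) < n := lt_of_le_of_lt (by positivity) hps
  have hσ0 : 0 < σ := lt_trans (by have := sub_pos.2 hps; positivity) hσ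
  have hαp : (n : ℝ) / σ * p < n - p * s := by
    rw [div_mul_eq_mul_div, div_lt_iff₀ hσ0]
    linarith [(div_lt_iff₀ (sub_pos.2 hps)).1 hσ]
  have : Nontrivial (EuclideanSpace ℝ (Fin n)) :=
    Module.nontrivial_of_finrank_pos (R := ℝ) (by simpa using hn)
  refine ⟨memBesov_truncatedRadialPower volume (by positivity) hs0 hs1 hp hq ?_, ?_⟩
  · rw [finrank_euclideanSpace_fin]; linarith
  · simpa [truncatedRadialPower] using setLIntegral_ball_abs_truncatedRadialPower_rpow_eq_top
      (volume : Measure (EuclideanSpace ℝ (Fin n))) hσ0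

end
end

section
/- Let (X,d,μ) be a doubling metric measure space. For every real-valued measurable function u on X there exists a measurable set E⊂X with μ(E)=0 such that for all z∈X∖E, the median values of u converge to u(z): for every ε>0 there exists δ>0 such that |m_u(B) − u(z)| < ε for every ball B containing z with μ(B) < δ. -/
open MeasureTheory Metric Set ENNReal NNReal

noncomputable section

variable {X : Type*} [MetricSpace X] [MeasurableSpace X] [BorelSpace X]

/-! Lebesgue's density theorem holds for a doubling measure on a separable space, and separability
comes for free: an `ε`-separated set carries disjoint balls of positive measure, so it is countable
for a σ-finite measure. Hence almost every point `z` of each rational level set `{q < u}` or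
`{u < q}` is a point at which that set fills more than half of every small ball containing `z`;
by doubling, balls of small measure containing `z` have small radius.
If `q₁ < u z < q₂` and `z` is such a point for `{q₁ < u}` and `{u < q₂}`, the median of `u` on
every ball of small enough measure containing `z` lies in `[q₁, q₂]`. -/

open Topology Filter

section Separability

variable {α : Type*} [PseudoMetricSpace α]

theorem exists_pairwise_le_dist_forall_exists_dist_lt {ε : ℝ} (hε : 0 < ε) :
    ∃ N : Set α, N.Pairwise (fun x y => ε ≤ dist x y) ∧ ∀ x, ∃ y ∈ N, dist x y < ε := by
  obtain ⟨N, hN⟩ := zorn_subset {N : Set α | N.Pairwise fun x y => ε ≤ dist x y}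
    fun c hc hchain => ⟨⋃₀ c, hchain.pairwise_sUnion.2 hc, fun _ => subset_sUnion_of_mem⟩
  refine ⟨N, hN.prop, fun x => ?_⟩
  by_contra! hfar
  have hx : x ∈ N := hN.mem_of_prop_insert <| hN.prop.insert fun y hy _ =>
    ⟨hfar y hy, dist_comm x y ▸ hfar y hy⟩
  exact (hfar x hx).not_gt (by simpa using hε)

variable [MeasurableSpace α] [OpensMeasurableSpace α]

theorem Set.Pairwise.countable_of_le_dist (μ : Measure α) [SFinite μ] {ε : ℝ}
    (hμ : ∀ x, 0 < μ (ball x (ε / 2))) {N : Set α} (hN : N.Pairwise fun x y => ε ≤ dist x y) :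
    N.Countable := by
  have hdisj : Pairwise (Function.onFun Disjoint fun y : N => ball (y : α) (ε / 2)) :=
    fun y y' hne => ball_disjoint_ball <| by
      rw [add_halves]
      exact hN y.2 y'.2 (Subtype.coe_ne_coe.2 hne)
  have hcount :=
    Measure.countable_meas_pos_of_disjoint_iUnion (μ := μ) (fun _ => measurableSet_ball) hdisj
  simp only [hμ, ofPred_true] at hcount
  exact countable_coe_iff.1 (countable_univ_iff.1 hcount)

theorem secondCountableTopology_of_measure_ball_pos (μ : Measure α) [SFinite μ]
    (hμ : ∀ x r, 0 < r → 0 < μ (ball x r)) : SecondCountableTopology α :=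
  Metric.secondCountable_of_almost_dense_set fun _ε hε =>
    let ⟨N, hsep, hcover⟩ := exists_pairwise_le_dist_forall_exists_dist_lt hε
    ⟨N, hsep.countable_of_le_dist μ fun x => hμ x _ (half_pos hε),
      fun x => (hcover x).imp fun _ hy => ⟨hy.1, hy.2.le⟩⟩

end Separability

namespace BallsPosFinite

variable {α : Type*} [MetricSpace α] [MeasurableSpace α] {μ : Measure α}

theorem sigmaFinite (hμ : BallsPosFinite μ) : SigmaFinite μ := by
  rcases isEmpty_or_nonempty α with hX | ⟨⟨x₀⟩⟩
  · infer_instance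
  exact Measure.sigmaFinite_of_countable (countable_range fun k : ℕ => ball x₀ (k + 1))
    (forall_mem_range.2 fun k => (hμ x₀ _ k.cast_add_one_pos).2)
    (by rw [sUnion_range, iUnion_ball_nat_succ])

theorem isLocallyFiniteMeasure (hμ : BallsPosFinite μ) : IsLocallyFiniteMeasure μ :=
  ⟨fun x => ⟨ball x 1, ball_mem_nhds x one_pos, (hμ x 1 one_pos).2⟩⟩

theorem secondCountableTopology [OpensMeasurableSpace α] (hμ : BallsPosFinite μ) :
    SecondCountableTopology α :=
  have := hμ.sigmaFinite
  secondCountableTopology_of_measure_ball_pos μ fun x r hr => (hμ x r hr).1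

end BallsPosFinite

namespace IsDoubling

variable {α : Type*} [MetricSpace α] [MeasurableSpace α] {μ : Measure α} {C₁ n : ℝ}

theorem measure_ball_two_mul_le (hμ : IsDoubling μ C₁ n) (x : α) {r : ℝ} (hr : 0 < r) :
    μ (ball x (2 * r)) ≤ (C₁ * 2 ^ n).toNNReal * μ (ball x r) :=
  hμ x r 2 hr one_lt_two

theorem measure_closedBall_le (hμ : IsDoubling μ C₁ n) (x : α) {r : ℝ} (hr : 0 < r) :
    μ (closedBall x r) ≤ (C₁ * 2 ^ n).toNNReal * μ (ball x r) :=
  (measure_mono (closedBall_subset_ball (by linarith))).trans (hμ.measure_ball_two_mul_le x hr)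

theorem measure_ball_le_of_mem_ball (hμ : IsDoubling μ C₁ n) {x z : α} {r t : ℝ} (hr : 0 < r)
    (hz : z ∈ ball x r) (ht : t ≤ r) :
    μ (ball z t) ≤ (C₁ * 2 ^ n).toNNReal * μ (ball x r) := by
  refine (measure_mono fun y hy => ?_).trans (hμ.measure_ball_two_mul_le x hr)
  rw [mem_ball] at hy hz ⊢
  linarith [dist_triangle y z x]

theorem lt_of_mul_measure_ball_lt (hμ : IsDoubling μ C₁ n) {x z : α} {r t : ℝ} (hr : 0 < r)
    (hz : z ∈ ball x r) (h : (C₁ * 2 ^ n).toNNReal * μ (ball x r) < μ (ball z t)) : r < t := by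
  by_contra! htr
  exact h.not_ge (hμ.measure_ball_le_of_mem_ball hr hz htr)

theorem isUnifLocDoublingMeasure (hμ : IsDoubling μ C₁ n) : IsUnifLocDoublingMeasure μ := by
  refine ⟨⟨(C₁ * 3 ^ n).toNNReal, ?_⟩⟩
  filter_upwards [self_mem_nhdsWithin] with ε (hε : 0 < ε) x
  calc μ (closedBall x (2 * ε)) ≤ μ (ball x (3 * ε)) :=
        measure_mono (closedBall_subset_ball (by linarith))
    _ ≤ (C₁ * 3 ^ n).toNNReal * μ (ball x ε) := hμ x ε 3 hε (by norm_num)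
    _ ≤ (C₁ * 3 ^ n).toNNReal * μ (closedBall x ε) := by gcongr; exact ball_subset_closedBall

end IsDoubling

theorem IsUnifLocDoublingMeasure.ae_exists_forall_lt_measure_inter_closedBall
    {α : Type*} [PseudoMetricSpace α] [MeasurableSpace α] [BorelSpace α]
    [SecondCountableTopology α] (μ : Measure α) [IsLocallyFiniteMeasure μ]
    [IsUnifLocDoublingMeasure μ] (S : Set α) {η : ℝ≥0∞} (hη : η < 1) :
    ∀ᵐ z ∂μ.restrict S, ∃ t > 0, ∀ (x : α) (r : ℝ), 0 < r → r < t → z ∈ closedBall x r →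
      η * μ (closedBall x r) < μ (S ∩ closedBall x r) := by
  filter_upwards [IsUnifLocDoublingMeasure.ae_tendsto_measure_inter_div μ S 1] with z hz
  let l := comap (fun p : {p : α × ℝ // z ∈ closedBall p.1 p.2} => p.1.2) (𝓝[>] 0)
  have hlim := hz (l := l) (fun p => p.1.1) (fun p => p.1.2) tendsto_comap
    (Eventually.of_forall fun p => by simpa using p.2)
  obtain ⟨t, ht, hsub⟩ := mem_nhdsGT_iff_exists_Ioo_subset.1
    (eventually_comap.1 (hlim.eventually (lt_mem_nhds hη)))
  exact ⟨t, ht, fun x r hr hrt hzx => ENNReal.mul_lt_of_lt_div (hsub ⟨hr, hrt⟩ ⟨(x, r), hzx⟩ rfl)⟩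

theorem medianVal_mem_Icc {α : Type*} [MeasurableSpace α] {μ : Measure α} {u : α → ℝ}
    {B : Set α} {a b : ℝ} (hB : μ B ≠ ∞) (ha : μ {x ∈ B | u x < a} ≤ μ B / 2)
    (hb : μ {x ∈ B | b ≤ u x} < μ B / 2) :
    medianVal μ u B ∈ Icc a b := by
  have hle : ∀ c ∈ {c : ℝ | μ {x ∈ B | u x < c} ≤ μ B / 2}, c ≤ b := by
    intro c hc
    by_contra! hbc
    have hcover : B ⊆ {x ∈ B | u x < c} ∪ {x ∈ B | b ≤ u x} := fun x hx =>
      (lt_or_ge (u x) c).imp (fun h => ⟨hx, h⟩) fun h => ⟨hx, hbc.le.trans h⟩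
    have hsum : μ B ≤ μ {x ∈ B | u x < c} + μ {x ∈ B | b ≤ u x} :=
      (measure_mono hcover).trans (measure_union_le _ _)
    refine hsum.not_gt ?_
    calc μ {x ∈ B | u x < c} + μ {x ∈ B | b ≤ u x} < μ B / 2 + μ B / 2 :=
          ENNReal.add_lt_add_of_le_of_lt
            (ne_top_of_le_ne_top (ENNReal.div_ne_top hB two_ne_zero) hc) hc hb
      _ = μ B := ENNReal.add_halves _
  exact ⟨le_csSup ⟨b, hle⟩ ha, csSup_le ⟨a, ha⟩ hle⟩

theorem measure_sdiff_lt_half_of_subset {α : Type*} [MeasurableSpace α] {μ : Measure α}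
    {B B' S : Set α} (hS : MeasurableSet S) (hBB' : B ⊆ B') (hB : μ B ≠ ∞) {K : ℝ≥0}
    (hK : μ B' ≤ K * μ B) (hfill : ENNReal.ofReal (1 - 1 / (2 * (K + 1))) * μ B' < μ (S ∩ B')) :
    μ (B \ S) < μ B / 2 := by
  set ρ : ℝ := 1 / (2 * (K + 1)) with hρ
  have hρ1 : ρ ≤ 1 := by
    rw [hρ, div_le_one (by positivity)]
    linarith [K.2]
  have hB' : μ B' ≠ ∞ := ne_top_of_le_ne_top (mul_ne_top coe_ne_top hB) hK
  have h1 : μ.real (B \ S) ≤ μ.real (B' \ S) :=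
    measureReal_mono (sdiff_subset_sdiff_left hBB')
      (ne_top_of_le_ne_top hB' (measure_mono sdiff_subset))
  have h2 : μ.real (B' \ S) + μ.real (S ∩ B') = μ.real B' :=
    inter_comm B' S ▸ measureReal_sdiff_add_inter hS hB'
  have h3 : μ.real B' ≤ K * μ.real B := by
    simpa [Measure.real, ENNReal.toReal_mul] using
      ENNReal.toReal_mono (mul_ne_top coe_ne_top hB) hK
  have h4 : (1 - ρ) * μ.real B' < μ.real (S ∩ B') := by
    simpa [Measure.real, ENNReal.toReal_mul, ENNReal.toReal_ofReal (sub_nonneg.2 hρ1)] using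
      ENNReal.toReal_strict_mono (ne_top_of_le_ne_top hB' (measure_mono inter_subset_right)) hfill
  have hB0 : 0 ≤ μ.real B := measureReal_nonneg
  have key : μ.real (B \ S) < μ.real B / 2 :=
    calc μ.real (B \ S) < ρ * μ.real B' := by linarith
      _ ≤ ρ * ((K + 1) * μ.real B) := by gcongr; linarith
      _ = μ.real B / 2 := by rw [hρ]; field_simp
  refine (ENNReal.toReal_lt_toReal (ne_top_of_le_ne_top hB (measure_mono sdiff_subset))
    (ENNReal.div_ne_top hB two_ne_zero)).1 ?_
  simpa [Measure.real, ENNReal.toReal_div] using key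

section HalfDensity

variable {α : Type*} [MetricSpace α] [MeasurableSpace α]

def IsHalfDensityPoint (μ : Measure α) (S : Set α) (z : α) : Prop :=
  ∃ δ : ℝ, 0 < δ ∧ ∀ (x : α) (r : ℝ), 0 < r → z ∈ ball x r → μ (ball x r) < ENNReal.ofReal δ →
    μ (ball x r \ S) < μ (ball x r) / 2

theorem IsDoubling.ae_isHalfDensityPoint [BorelSpace α] {μ : Measure α} {C₁ n : ℝ}
    (hdoub : IsDoubling μ C₁ n) (hballs : BallsPosFinite μ) {S : Set α} (hS : MeasurableSet S) :
    ∀ᵐ z ∂μ.restrict S, IsHalfDensityPoint μ S z := by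
  have := hballs.secondCountableTopology
  have := hballs.isLocallyFiniteMeasure
  have := hdoub.isUnifLocDoublingMeasure
  set D : ℝ≥0 := (C₁ * 2 ^ n).toNNReal
  have hη : ENNReal.ofReal (1 - 1 / (2 * (D + 1))) < 1 :=
    ENNReal.ofReal_lt_one.2 (sub_lt_self 1 (by positivity))
  filter_upwards [IsUnifLocDoublingMeasure.ae_exists_forall_lt_measure_inter_closedBall μ S hη]
    with z ⟨t, ht, hfill⟩
  obtain ⟨hz0, hztop⟩ := hballs z (t / 2) (half_pos ht)
  set m : ℝ≥0∞ := μ (ball z (t / 2)) / (D + 1)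
  have hm0 : m ≠ 0 := (ENNReal.div_pos hz0.ne' (by simp)).ne'
  have hmtop : m ≠ ∞ := ENNReal.div_ne_top hztop.ne (by simp)
  refine ⟨m.toReal, ENNReal.toReal_pos hm0 hmtop, fun x r hr hzB hsmall => ?_⟩
  rw [ENNReal.ofReal_toReal hmtop] at hsmall
  -- a ball of measure below `m` containing `z` is too small to swallow `ball z (t / 2)`
  have hrt : r < t / 2 := hdoub.lt_of_mul_measure_ball_lt hr hzB <|
    calc D * μ (ball x r) ≤ (D + 1) * μ (ball x r) := by gcongr; exact le_self_add
      _ < μ (ball z (t / 2)) := by rw [mul_comm]; exact ENNReal.mul_lt_of_lt_div hsmall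
  exact measure_sdiff_lt_half_of_subset hS ball_subset_closedBall (hballs x r hr).2.ne
    (hdoub.measure_closedBall_le x hr) (hfill x r hr (by linarith) (ball_subset_closedBall hzB))

theorem IsHalfDensityPoint.exists_medianVal_mem_Icc {μ : Measure α} (hballs : BallsPosFinite μ)
    {u : α → ℝ} {a b : ℝ} {z : α} (ha : IsHalfDensityPoint μ {y | a < u y} z)
    (hb : IsHalfDensityPoint μ {y | u y < b} z) :
    ∃ δ : ℝ, 0 < δ ∧ ∀ (x : α) (r : ℝ), 0 < r → z ∈ ball x r → μ (ball x r) < ENNReal.ofReal δ →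
      medianVal μ u (ball x r) ∈ Icc a b := by
  obtain ⟨δ₁, hδ₁, h₁⟩ := ha
  obtain ⟨δ₂, hδ₂, h₂⟩ := hb
  refine ⟨min δ₁ δ₂, lt_min hδ₁ hδ₂, fun x r hr hzB hsmall => ?_⟩
  have hsmall₁ := hsmall.trans_le (ENNReal.ofReal_le_ofReal (min_le_left δ₁ δ₂))
  have hsmall₂ := hsmall.trans_le (ENNReal.ofReal_le_ofReal (min_le_right δ₁ δ₂))
  refine medianVal_mem_Icc (hballs x r hr).2.ne ?_ ?_
  · refine (measure_mono fun y hy => ?_).trans (h₁ x r hr hzB hsmall₁).le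
    exact ⟨hy.1, not_lt.2 hy.2.le⟩
  · refine (measure_mono fun y hy => ?_).trans_lt (h₂ x r hr hzB hsmall₂)
    exact ⟨hy.1, not_lt.2 hy.2⟩

end HalfDensity

theorem statement11_general
    (μ : Measure X) (C₁ n : ℝ)
    (hdoub : IsDoubling μ C₁ n) (hballs : BallsPosFinite μ)
    : ∀ u : X → ℝ, Measurable u →
      ∃ E : Set X, μ E = 0 ∧
        ∀ z : X, z ∉ E → ∀ ε : ℝ, 0 < ε → ∃ δ : ℝ, 0 < δ ∧
          ∀ (x : X) (r : ℝ), 0 < r → z ∈ ball x r → μ (ball x r) < ENNReal.ofReal δ →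
            |medianVal μ u (ball x r) - u z| < ε := by
  intro u hu
  have hdens : ∀ᵐ z ∂μ, ∀ q : ℚ,
      (z ∈ {y | q < u y} → IsHalfDensityPoint μ {y | q < u y} z) ∧
      (z ∈ {y | u y < q} → IsHalfDensityPoint μ {y | u y < q} z) := by
    refine ae_all_iff.2 fun q => ?_
    have hsup : MeasurableSet {y | (q : ℝ) < u y} := measurableSet_lt measurable_const hu
    have hsub : MeasurableSet {y | u y < q} := measurableSet_lt hu measurable_const
    exact ((ae_restrict_iff' hsup).1 (hdoub.ae_isHalfDensityPoint hballs hsup)).and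
      ((ae_restrict_iff' hsub).1 (hdoub.ae_isHalfDensityPoint hballs hsub))
  refine ⟨_, ae_iff.1 hdens, fun z hz ε hε => ?_⟩
  rw [mem_ofPred_eq, not_not] at hz
  obtain ⟨q₁, hq₁ε, hq₁z⟩ := exists_rat_btwn (sub_lt_self (u z) hε)
  obtain ⟨q₂, hq₂z, hq₂ε⟩ := exists_rat_btwn (lt_add_of_pos_right (u z) hε)
  obtain ⟨δ, hδ, hmed⟩ :=
    IsHalfDensityPoint.exists_medianVal_mem_Icc hballs ((hz q₁).1 hq₁z) ((hz q₂).2 hq₂z)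
  refine ⟨δ, hδ, fun x r hr hzB hsmall => ?_⟩
  obtain ⟨hq₁m, hmq₂⟩ := hmed x r hr hzB hsmall
  rw [abs_sub_lt_iff]
  constructor <;> linarith

theorem statement11
    (μ : Measure X) [μ.Regular] (C₁ n : ℝ) (hC₁ : 1 < C₁) (hn : 0 < n)
    (hdoub : IsDoubling μ C₁ n) (hballs : BallsPosFinite μ)
    : ∀ u : X → ℝ, Measurable u →
      ∃ E : Set X, μ E = 0 ∧
        ∀ z : X, z ∉ E → ∀ ε : ℝ, 0 < ε → ∃ δ : ℝ, 0 < δ ∧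
          ∀ (x : X) (r : ℝ), 0 < r → z ∈ ball x r → μ (ball x r) < ENNReal.ofReal δ →
            |medianVal μ u (ball x r) - u z| < ε :=
  statement11_general μ C₁ n hdoub hballs

end
end

section
/- Let (X,d,μ) be a metric measure space in which every ball has finite positive measure, and let σ∈(0,∞). Then for every ball B⊂X, every real-valued measurable function u, and every c∈ℝ: |m_u(B) − c| ≤ (2 ⨍_B |u(w)−c|^σ dμ(w))^{1/σ}. -/
open MeasureTheory Metric Set ENNReal NNReal

noncomputable section

variable {X : Type*} [MetricSpace X] [MeasurableSpace X] [BorelSpace X]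

/-!
Pushing `μ` restricted to `B` forward under `u` reduces everything to the median `m` of a finite
measure `ν` on `ℝ`. Left continuity of `a ↦ ν (Iio a)` gives `ν (Iio m) ≤ ν ℝ / 2` and right
continuity gives `ν ℝ / 2 ≤ ν (Iic m)`, so the half-line `[m, ∞)` or `(-∞, m]` pointing away from
`c` carries half of the mass, and on it `|m - c| ≤ |y - c|`. Markov's inequality then yields
`|m - c| ^ σ * ν ℝ / 2 ≤ ∫ |y - c| ^ σ dν`.
-/

open Filter Topology

namespace MeasureTheory.Measure

/-- Meaningful for finite `ν ≠ 0`; otherwise the set is all of `ℝ` and `sSup` returns `0`. -/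
def median (ν : Measure ℝ) : ℝ :=
  sSup {a : ℝ | ν (Iio a) ≤ ν univ / 2}

variable {ν : Measure ℝ} [IsFiniteMeasure ν]

lemma nonempty_setOf_measure_Iio_le_half (hν : ν ≠ 0) :
    {a : ℝ | ν (Iio a) ≤ ν univ / 2}.Nonempty := by
  have hempty : ⋂ a : ℝ, Iio a = ∅ := by
    ext y
    simpa using ⟨y, le_rfl⟩
  have htend : Tendsto (ν ∘ Iio) atBot (𝓝 0) := by
    simpa [hempty] using tendsto_measure_iInter_atBot (μ := ν)
      (fun _ => measurableSet_Iio.nullMeasurableSet) monotone_Iio ⟨0, measure_ne_top ν _⟩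
  have hhalf : 0 < ν univ / 2 :=
    ENNReal.half_pos (measure_univ_ne_zero.2 hν)
  exact (htend.eventually_lt_const hhalf).exists.imp fun _ h => h.le

lemma bddAbove_setOf_measure_Iio_le_half (hν : ν ≠ 0) :
    BddAbove {a : ℝ | ν (Iio a) ≤ ν univ / 2} := by
  have htend : Tendsto (ν ∘ Iio) atTop (𝓝 (ν univ)) := by
    simpa [iUnion_Iio] using tendsto_measure_iUnion_atTop (μ := ν) monotone_Iio
  have hhalf : ν univ / 2 < ν univ :=
    ENNReal.half_lt_self (measure_univ_ne_zero.2 hν) (measure_ne_top ν _)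
  obtain ⟨b, hb⟩ := (htend.eventually_const_lt hhalf).exists
  refine ⟨b, fun a ha => le_of_not_gt fun hba => ?_⟩
  exact (hb.trans_le (measure_mono (Iio_subset_Iio hba.le))).not_ge ha

lemma measure_Iio_median_le (hν : ν ≠ 0) : ν (Iio ν.median) ≤ ν univ / 2 := by
  obtain ⟨a, ha_mono, ha_tendsto, ha_mem⟩ := exists_seq_tendsto_sSup
    (nonempty_setOf_measure_Iio_le_half hν) (bddAbove_setOf_measure_Iio_le_half hν)
  have hunion : ⋃ n, Iio (a n) = Iio ν.median :=
    (isLUB_of_tendsto_atTop ha_mono ha_tendsto).iUnion_Iio_eq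
  rw [← hunion, Monotone.measure_iUnion (s := fun n => Iio (a n)) (monotone_Iio.comp ha_mono)]
  exact iSup_le ha_mem

lemma le_measure_Iic_median (hν : ν ≠ 0) : ν univ / 2 ≤ ν (Iic ν.median) := by
  have hinter : ⋂ b > ν.median, Iio b = Iic ν.median := by
    ext y
    simpa using forall_gt_iff_le
  have htend : Tendsto (fun b => ν (Iio b)) (𝓝[>] ν.median) (𝓝 (ν (Iic ν.median))) := by
    rw [← hinter]
    exact tendsto_measure_biInter_gt (fun _ _ => measurableSet_Iio.nullMeasurableSet)
      (fun _ _ _ hij => Iio_subset_Iio hij) ⟨ν.median + 1, by simp, measure_ne_top ν _⟩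
  refine ge_of_tendsto htend (eventually_nhdsWithin_of_forall fun b hb => ?_)
  by_contra! hb'
  exact (not_le.2 hb) (le_csSup (bddAbove_setOf_measure_Iio_le_half hν) hb'.le)

lemma le_measure_abs_median_sub_le (hν : ν ≠ 0) (c : ℝ) :
    ν univ / 2 ≤ ν {y | |ν.median - c| ≤ |y - c|} := by
  rcases le_total c ν.median with hc | hc
  · calc ν univ / 2 = ν univ - ν univ / 2 := (ENNReal.sub_half (measure_ne_top ν _)).symm
      _ ≤ ν univ - ν (Iio ν.median) := tsub_le_tsub_left (measure_Iio_median_le hν) _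
      _ = ν (Ici ν.median) := by
        rw [← compl_Iio, measure_compl measurableSet_Iio (measure_ne_top ν _)]
      _ ≤ _ := measure_mono fun y (hy : ν.median ≤ y) => by
        show |ν.median - c| ≤ |y - c|
        rw [abs_of_nonneg (sub_nonneg.2 hc), abs_of_nonneg (sub_nonneg.2 (hc.trans hy))]
        linarith
  · refine (le_measure_Iic_median hν).trans (measure_mono fun y (hy : y ≤ ν.median) => ?_)
    show |ν.median - c| ≤ |y - c|
    rw [abs_of_nonpos (sub_nonpos.2 hc), abs_of_nonpos (sub_nonpos.2 (hy.trans hc))]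
    linarith

lemma ofReal_abs_median_sub_le (hν : ν ≠ 0) (c : ℝ) {σ : ℝ} (hσ : 0 < σ) :
    ENNReal.ofReal |ν.median - c| ≤ (2 * ⨍⁻ y, ENNReal.ofReal |y - c| ^ σ ∂ν) ^ (1 / σ) := by
  set ε := ENNReal.ofReal |ν.median - c| ^ σ
  have hmarkov : ε * (ν univ / 2) ≤ ∫⁻ y, ENNReal.ofReal |y - c| ^ σ ∂ν := by
    refine le_trans ?_ (mul_meas_ge_le_lintegral (by fun_prop) ε)
    gcongr ε * ?_
    refine (le_measure_abs_median_sub_le hν c).trans (measure_mono fun y hy => ?_)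
    exact ENNReal.rpow_le_rpow (ENNReal.ofReal_le_ofReal hy) hσ.le
  have hε : ε ≤ 2 * ⨍⁻ y, ENNReal.ofReal |y - c| ^ σ ∂ν := by
    have hN0 : ν univ ≠ 0 := measure_univ_ne_zero.2 hν
    refine (ENNReal.mul_le_mul_iff_left hN0 (measure_ne_top ν _)).1 ?_
    calc ε * ν univ = 2 * (ε * (ν univ / 2)) := by
          rw [mul_left_comm, ENNReal.mul_div_cancel two_ne_zero ENNReal.ofNat_ne_top]
      _ ≤ 2 * ((⨍⁻ y, ENNReal.ofReal |y - c| ^ σ ∂ν) * ν univ) := by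
          rw [laverage_mul_measure_univ]
          gcongr
      _ = _ := (mul_assoc _ _ _).symm
  calc ENNReal.ofReal |ν.median - c| = ε ^ (1 / σ) := by
        rw [← ENNReal.rpow_mul, mul_one_div_cancel hσ.ne', ENNReal.rpow_one]
    _ ≤ _ := ENNReal.rpow_le_rpow hε (by positivity)

end MeasureTheory.Measure

lemma laverage_map {α β : Type*} [MeasurableSpace α] [MeasurableSpace β] {μ : Measure α}
    {f : β → ℝ≥0∞} {g : α → β} (hf : Measurable f) (hg : Measurable g) :
    ⨍⁻ y, f y ∂μ.map g = ⨍⁻ x, f (g x) ∂μ := by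
  rw [laverage_eq, laverage_eq, lintegral_map hf hg, Measure.map_apply hg MeasurableSet.univ,
    preimage_univ]

lemma medianVal_eq_median_map {α : Type*} [MeasurableSpace α] (μ : Measure α) {u : α → ℝ}
    (hu : Measurable u) (B : Set α) :
    medianVal μ u B = ((μ.restrict B).map u).median := by
  have hsub : ∀ a : ℝ, {x ∈ B | u x < a} = u ⁻¹' Iio a ∩ B := fun a => by
    ext x
    simp [and_comm]
  simp only [medianVal, Measure.median, Measure.map_apply hu measurableSet_Iio,
    Measure.map_apply hu MeasurableSet.univ, Measure.restrict_apply (hu measurableSet_Iio),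
    preimage_univ, Measure.restrict_apply_univ, hsub]

theorem statement12_general
    (μ : Measure X) (hballs : BallsPosFinite μ)
    (σ : ℝ) (hσ : 0 < σ) :
    ∀ (x : X) (r : ℝ), 0 < r → ∀ u : X → ℝ, Measurable u → ∀ c : ℝ,
      ENNReal.ofReal |medianVal μ u (ball x r) - c| ≤
        (2 * ⨍⁻ w in ball x r, ENNReal.ofReal |u w - c| ^ σ ∂μ) ^ (1 / σ) := by
  intro x r hr u hu c
  obtain ⟨hB0, hBfin⟩ := hballs x r hr
  have : IsFiniteMeasure (μ.restrict (ball x r)) := isFiniteMeasure_restrict.2 hBfin.ne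
  have hν : (μ.restrict (ball x r)).map u ≠ 0 := by
    rw [← Measure.measure_univ_ne_zero, Measure.map_apply hu MeasurableSet.univ, preimage_univ,
      Measure.restrict_apply_univ]
    exact hB0.ne'
  rw [medianVal_eq_median_map μ hu,
    ← laverage_map (f := fun y => ENNReal.ofReal |y - c| ^ σ) (by fun_prop) hu]
  exact Measure.ofReal_abs_median_sub_le hν c hσ

theorem statement12
    (μ : Measure X) [μ.Regular] (hballs : BallsPosFinite μ)
    (σ : ℝ) (hσ : 0 < σ) :
    ∀ (x : X) (r : ℝ), 0 < r → ∀ u : X → ℝ, Measurable u → ∀ c : ℝ,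
      ENNReal.ofReal |medianVal μ u (ball x r) - c| ≤
        (2 * ⨍⁻ w in ball x r, ENNReal.ofReal |u w - c| ^ σ ∂μ) ^ (1 / σ) :=
  statement12_general μ hballs σ hσ

end
end
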